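/- arXiv:1407.4679 — 5 statements merged into one kernel-verified Lean document; each statement's English description precedes it below -/
import Mathlib

section
/- ∫_0^1 arctan(x)/(1+x) dx = (π/8) log 2. -/
/-!
The substitution `x = (1 - t) / (1 + t)` is an involution of `[0, 1]` under which
`dx / (1 + x) = -dt / (1 + t)` and `arctan x = π / 4 - arctan t`. Hence the integral `I`
satisfies `I = π / 4 * ∫ 1 / (1 + t) - I = π / 4 * log 2 - I`.
-/

open Real intervalIntegral Set
open scoped Interval

lemma arctan_one_sub_div_one_add {t : ℝ} (ht : -1 < t) :
    arctan ((1 - t) / (1 + t)) = π / 4 - arctan t := by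
  have hpos : 0 < 1 + t := by linarith
  have hprod : (1 - t) / (1 + t) * t < 1 := by
    rw [div_mul_eq_mul_div, div_lt_one hpos]
    nlinarith [sq_nonneg t]
  have hsum : ((1 - t) / (1 + t) + t) / (1 - (1 - t) / (1 + t) * t) = 1 := by
    rw [div_eq_one_iff_eq (sub_pos.2 hprod).ne']
    field_simp
    ring
  linarith [arctan_add hprod, hsum ▸ arctan_one]

lemma mapsTo_one_sub_div_one_add :
    MapsTo (fun t : ℝ ↦ (1 - t) / (1 + t)) (Icc 0 1) (Icc 0 1) := by
  rintro t ⟨h0, h1⟩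
  have hpos : 0 < 1 + t := by linarith
  exact ⟨div_nonneg (by linarith) hpos.le, (div_le_one hpos).2 (by linarith)⟩

lemma integral_comp_one_sub_div_one_add {g : ℝ → ℝ} (hg : ContinuousOn g (Icc 0 1)) :
    ∫ x in (0:ℝ)..1, g x = ∫ t in (0:ℝ)..1, g ((1 - t) / (1 + t)) * (2 / (1 + t) ^ 2) := by
  have hderiv : ∀ t ∈ [[(0:ℝ), 1]],
      HasDerivAt (fun t ↦ (1 - t) / (1 + t)) (-(2 / (1 + t) ^ 2)) t := by
    intro t ht
    rw [uIcc_of_le zero_le_one] at ht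
    have hpos : 0 < 1 + t := by linarith [ht.1]
    refine (((hasDerivAt_id' t).const_sub 1).fun_div ((hasDerivAt_id' t).const_add 1)
      hpos.ne').congr_deriv ?_
    ring
  have hderiv_cont : ContinuousOn (fun t : ℝ ↦ -(2 / (1 + t) ^ 2)) [[0, 1]] := by
    rw [uIcc_of_le zero_le_one]
    refine (continuousOn_const.div (by fun_prop) fun t ht ↦ ?_).neg
    have := ht.1
    positivity
  have hg' : ContinuousOn g ((fun t : ℝ ↦ (1 - t) / (1 + t)) '' [[0, 1]]) := by
    rw [uIcc_of_le zero_le_one]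
    exact hg.mono mapsTo_one_sub_div_one_add.image_subset
  have := integral_comp_mul_deriv' hderiv hderiv_cont hg'
  simp only [Function.comp_def, mul_neg, integral_neg] at this
  norm_num only [sub_self, add_zero, div_one, sub_zero, zero_add] at this
  simpa only [integral_symm 0 1, neg_neg, neg_inj] using this.symm

lemma integral_one_div_one_add : ∫ t in (0:ℝ)..1, 1 / (1 + t) = log 2 := by
  rw [integral_comp_add_left (fun x ↦ 1 / x), integral_one_div_of_pos] <;> norm_num

theorem stmt_6 :
    ∫ x in (0:ℝ)..1, Real.arctan x / (1 + x) = Real.pi / 8 * Real.log 2 := by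
  have hcont : ContinuousOn (fun x ↦ arctan x / (1 + x)) (Icc 0 1) :=
    continuous_arctan.continuousOn.div (by fun_prop) fun x hx ↦ by linarith [hx.1]
  have hintegrand : ∀ t ∈ [[(0:ℝ), 1]], arctan ((1 - t) / (1 + t)) / (1 + (1 - t) / (1 + t)) *
      (2 / (1 + t) ^ 2) = π / 4 * (1 / (1 + t)) - arctan t / (1 + t) := by
    intro t ht
    rw [uIcc_of_le zero_le_one] at ht
    have hpos : 0 < 1 + t := by linarith [ht.1]
    rw [arctan_one_sub_div_one_add (by linarith [ht.1])]
    field_simp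
    ring
  have hint : IntervalIntegrable (fun t : ℝ ↦ 1 / (1 + t)) MeasureTheory.volume 0 1 :=
    (continuousOn_const.div (by fun_prop) fun x hx ↦ by
      rw [uIcc_of_le zero_le_one] at hx; linarith [hx.1]).intervalIntegrable
  have hself := integral_comp_one_sub_div_one_add hcont
  rw [integral_congr hintegrand, integral_sub (hint.const_mul _) (hcont.intervalIntegrable_of_Icc
    zero_le_one), integral_const_mul, integral_one_div_one_add] at hself
  linarith
end

section
/- For every continuous function f on [0,1], (1/n²) ∑_{k=1}^n f(k/n) σ(k) converges to (π²/6) ∫_0^1 x f(x) dx. -/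
/-!
Since `σ 1 k = ∑_{dm = k} d`, grouping the terms by the cofactor `m` rewrites the normalized sum
as `∑_{m ≥ 1} m⁻² R(m/n)`, where `R(δ)` is the right-endpoint Riemann sum of `x f(x)` on `[0, 1]`
with step `δ`. For each fixed `m` the step `m/n` tends to `0`, so `R(m/n) → ∫₀¹ x f(x) dx`; and
`|R| ≤ sup |x f(x)|` uniformly, so dominated convergence for series together with
`∑ m⁻² = π²/6` gives the limit.
-/

open Filter Finset Topology

/-- The last, incomplete cell `[⌊δ⁻¹⌋₊ δ, 1]` is dropped. -/
noncomputable def riemannSum (h : ℝ → ℝ) (δ : ℝ) : ℝ :=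
  δ * ∑ d ∈ Icc 1 ⌊δ⁻¹⌋₊, h (d * δ)

theorem natCast_mul_le_one_of_le_floor_inv {δ : ℝ} (hδ : 0 ≤ δ) {d : ℕ} (hd : d ≤ ⌊δ⁻¹⌋₊) :
    (d : ℝ) * δ ≤ 1 := by
  rcases hδ.eq_or_lt with rfl | hδ
  · simp
  calc (d : ℝ) * δ ≤ δ⁻¹ * δ := by
        gcongr; exact (Nat.cast_le.mpr hd).trans (Nat.floor_le (by positivity))
    _ = 1 := inv_mul_cancel₀ hδ.ne'

theorem abs_riemannSum_le {h : ℝ → ℝ} {C δ : ℝ} (hδ : 0 ≤ δ) (hC : ∀ x ∈ Set.Icc 0 1, |h x| ≤ C) :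
    |riemannSum h δ| ≤ C := by
  have hC0 : 0 ≤ C := (abs_nonneg _).trans (hC 0 ⟨le_rfl, zero_le_one⟩)
  calc |riemannSum h δ| ≤ δ * ∑ _d ∈ Icc 1 ⌊δ⁻¹⌋₊, C := by
        rw [riemannSum, abs_mul, abs_of_nonneg hδ]
        gcongr
        refine (abs_sum_le_sum_abs _ _).trans (sum_le_sum fun d hd => hC _ ⟨by positivity, ?_⟩)
        exact natCast_mul_le_one_of_le_floor_inv hδ (mem_Icc.mp hd).2
    _ = (⌊δ⁻¹⌋₊ * δ) * C := by
        simp only [sum_const, Nat.card_Icc, add_tsub_cancel_right, nsmul_eq_mul]; ring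
    _ ≤ C := mul_le_of_le_one_left hC0 (natCast_mul_le_one_of_le_floor_inv hδ le_rfl)

theorem Icc_natCast_mul_subset_Icc_zero_one {δ : ℝ} (hδ : 0 ≤ δ) {i : ℕ} (hi : i < ⌊δ⁻¹⌋₊) :
    Set.Icc (i * δ) ((i + 1) * δ) ⊆ Set.Icc 0 1 :=
  Set.Icc_subset_Icc (by positivity) (by exact_mod_cast natCast_mul_le_one_of_le_floor_inv hδ hi)

theorem riemannSum_sub_integral_eq_sum {h : ℝ → ℝ} (hh : ContinuousOn h (Set.Icc 0 1)) {δ : ℝ}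
    (hδ : 0 < δ) :
    riemannSum h δ - ∫ x in (0 : ℝ)..⌊δ⁻¹⌋₊ * δ, h x
      = ∑ i ∈ range ⌊δ⁻¹⌋₊, ∫ x in (i * δ)..((i + 1) * δ), (h ((i + 1) * δ) - h x) := by
  have hint (i : ℕ) (hi : i < ⌊δ⁻¹⌋₊) :
      IntervalIntegrable h MeasureTheory.volume (i * δ) ((i + 1) * δ) :=
    (hh.mono (Icc_natCast_mul_subset_Icc_zero_one hδ.le hi)).intervalIntegrable_of_Icc
      (by nlinarith)
  have hadj := intervalIntegral.sum_integral_adjacent_intervals (a := fun i : ℕ => (i : ℝ) * δ)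
    (f := h) (μ := MeasureTheory.volume) fun i hi => by exact_mod_cast hint i hi
  simp only [Nat.cast_zero, zero_mul, Nat.cast_add, Nat.cast_one] at hadj
  rw [← hadj, riemannSum, ← Ico_add_one_right_eq_Icc, sum_Ico_eq_sum_range, Nat.add_sub_cancel,
    mul_sum, ← sum_sub_distrib]
  refine sum_congr rfl fun i hi => ?_
  rw [intervalIntegral.integral_sub intervalIntegrable_const (hint i (mem_range.mp hi)),
    intervalIntegral.integral_const, smul_eq_mul]
  push_cast
  rw [add_comm 1 (i : ℝ)]
  ring

theorem abs_riemannSum_sub_integral_le {h : ℝ → ℝ} (hh : ContinuousOn h (Set.Icc 0 1))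
    {δ ε : ℝ} (hδ : 0 < δ)
    (hosc : ∀ x ∈ Set.Icc (0 : ℝ) 1, ∀ y ∈ Set.Icc (0 : ℝ) 1, |x - y| ≤ δ → |h x - h y| ≤ ε) :
    |riemannSum h δ - ∫ x in (0 : ℝ)..⌊δ⁻¹⌋₊ * δ, h x| ≤ ε := by
  set N := ⌊δ⁻¹⌋₊
  have hε : 0 ≤ ε := by
    simpa using hosc 0 ⟨le_rfl, zero_le_one⟩ 0 ⟨le_rfl, zero_le_one⟩ (by simpa using hδ.le)
  have hcell (i : ℕ) (hi : i ∈ range N) :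
      |∫ x in (i * δ)..((i + 1) * δ), (h ((i + 1) * δ) - h x)| ≤ ε * δ := by
    have hsub := Icc_natCast_mul_subset_Icc_zero_one hδ.le (mem_range.mp hi)
    have hle : (i : ℝ) * δ ≤ (i + 1) * δ := by nlinarith
    rw [← Real.norm_eq_abs]
    refine (intervalIntegral.norm_integral_le_of_norm_le_const (C := ε) fun x hx => ?_).trans_eq ?_
    · rw [Set.uIoc_of_le hle] at hx
      refine hosc _ (hsub ⟨hle, le_rfl⟩) _ (hsub (Set.Ioc_subset_Icc_self hx)) ?_
      rw [abs_of_nonneg (by linarith [hx.2])]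
      linarith [hx.1]
    · rw [abs_of_nonneg (by linarith)]; ring
  calc |riemannSum h δ - ∫ x in (0 : ℝ)..N * δ, h x|
      ≤ ∑ i ∈ range N, ε * δ := by
        rw [riemannSum_sub_integral_eq_sum hh hδ]
        exact (abs_sum_le_sum_abs _ _).trans (sum_le_sum hcell)
    _ = (N * δ) * ε := by simp only [sum_const, card_range, nsmul_eq_mul]; ring
    _ ≤ ε := mul_le_of_le_one_left hε (natCast_mul_le_one_of_le_floor_inv hδ.le le_rfl)

theorem tendsto_natFloor_inv_mul_nhdsGT_zero :
    Tendsto (fun δ : ℝ => ⌊δ⁻¹⌋₊ * δ) (𝓝[>] 0) (𝓝[Set.Icc 0 1] 1) := by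
  refine tendsto_nhdsWithin_iff.mpr ⟨?_, ?_⟩
  · simpa [Function.comp_def, div_inv_eq_mul] using
      (tendsto_nat_floor_div_atTop (R := ℝ)).comp tendsto_inv_nhdsGT_zero
  · filter_upwards [self_mem_nhdsWithin] with δ (hδ : 0 < δ)
    exact ⟨by positivity, natCast_mul_le_one_of_le_floor_inv (le_of_lt hδ) le_rfl⟩

theorem tendsto_riemannSum {h : ℝ → ℝ} (hh : ContinuousOn h (Set.Icc 0 1)) :
    Tendsto (riemannSum h) (𝓝[>] 0) (𝓝 (∫ x in (0 : ℝ)..1, h x)) := by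
  have herr : Tendsto (fun δ => riemannSum h δ - ∫ x in (0 : ℝ)..⌊δ⁻¹⌋₊ * δ, h x)
      (𝓝[>] 0) (𝓝 0) := by
    refine Metric.tendsto_nhds.mpr fun ε hε => ?_
    obtain ⟨η, hη, hosc⟩ := Metric.uniformContinuousOn_iff_le.mp
      (isCompact_Icc.uniformContinuousOn_of_continuous hh) (ε / 2) (half_pos hε)
    filter_upwards [Ioo_mem_nhdsGT hη] with δ hδ
    rw [Real.dist_0_eq_abs]
    refine (abs_riemannSum_sub_integral_le hh hδ.1 fun x hx y hy hxy => ?_).trans_lt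
      (half_lt_self hε)
    simpa only [Real.dist_eq] using hosc x hx y hy (by rw [Real.dist_eq]; linarith [hδ.2])
  have hprim : Tendsto (fun b => ∫ x in (0 : ℝ)..b, h x) (𝓝[Set.Icc 0 1] 1)
      (𝓝 (∫ x in (0 : ℝ)..1, h x)) := by
    have := intervalIntegral.continuousOn_primitive_interval (a := 0) (b := 1)
      (μ := MeasureTheory.volume) (hh.integrableOn_Icc.mono_set (Set.uIcc_of_le zero_le_one).le)
    rw [Set.uIcc_of_le zero_le_one] at this
    exact this 1 ⟨zero_le_one, le_rfl⟩
  simpa using herr.add (hprim.comp tendsto_natFloor_inv_mul_nhdsGT_zero)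

theorem sum_Icc_sum_divisors {M : Type*} [AddCommMonoid M] (n : ℕ) (g : ℕ → ℕ → M) :
    ∑ k ∈ Icc 1 n, ∑ d ∈ k.divisors, g k d = ∑ m ∈ Icc 1 n, ∑ d ∈ Icc 1 (n / m), g (d * m) d := by
  calc ∑ k ∈ Icc 1 n, ∑ d ∈ k.divisors, g k d
      = ∑ k ∈ Icc 1 n, ∑ m ∈ k.divisors, g k (k / m) :=
        sum_congr rfl fun k _ => (Nat.sum_div_divisors k (g k)).symm
    _ = ∑ m ∈ Icc 1 n, ∑ k ∈ Icc 1 n with m ∣ k, g k (k / m) := by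
        refine sum_comm' fun k m => ?_
        simp only [mem_Icc, Nat.mem_divisors, mem_filter]
        constructor
        · rintro ⟨hk, hmk, -⟩
          exact ⟨⟨hk, hmk⟩, Nat.pos_of_dvd_of_pos hmk hk.1, (Nat.le_of_dvd hk.1 hmk).trans hk.2⟩
        · rintro ⟨⟨hk, hmk⟩, -⟩
          exact ⟨hk, hmk, by omega⟩
    _ = ∑ m ∈ Icc 1 n, ∑ d ∈ Icc 1 (n / m), g (d * m) d := by
        refine sum_congr rfl fun m hm => ?_
        have hm : 0 < m := (mem_Icc.mp hm).1
        refine sum_nbij' (· / m) (· * m) ?_ ?_ ?_ ?_ ?_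
        · rintro k hk
          simp only [mem_filter, mem_Icc] at hk ⊢
          obtain ⟨⟨hk1, hkn⟩, c, rfl⟩ := hk
          rw [Nat.mul_div_cancel_left _ hm]
          exact ⟨Nat.pos_of_ne_zero (by rintro rfl; simp at hk1),
            (Nat.le_div_iff_mul_le hm).mpr (by linarith)⟩
        · intro d hd
          simp only [mem_filter, mem_Icc, Nat.le_div_iff_mul_le hm] at hd ⊢
          exact ⟨⟨by nlinarith, hd.2⟩, dvd_mul_left m d⟩
        · rintro k hk
          exact Nat.div_mul_cancel (mem_filter.mp hk).2
        · intro d _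
          exact Nat.mul_div_cancel d hm
        · rintro k hk
          rw [Nat.div_mul_cancel (mem_filter.mp hk).2]

theorem one_div_sq_mul_sum_mul_sigma_one_eq_tsum (f : ℝ → ℝ) (n : ℕ) :
    1 / (n : ℝ) ^ 2 * ∑ k ∈ Icc 1 n, f (k / n) * (ArithmeticFunction.sigma 1 k : ℝ)
      = ∑' m : ℕ, riemannSum (fun x => x * f x) (m / n) / m ^ 2 := by
  rw [tsum_eq_sum (s := Icc 1 n) fun m hm => ?_]
  · simp_rw [ArithmeticFunction.sigma_one_apply, Nat.cast_sum, mul_sum]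
    rw [sum_Icc_sum_divisors]
    refine sum_congr rfl fun m hm => ?_
    have hm : (m : ℝ) ≠ 0 := by have := (mem_Icc.mp hm).1; positivity
    rw [riemannSum, inv_div, Nat.floor_div_eq_div, mul_sum, sum_div]
    refine sum_congr rfl fun d _ => ?_
    push_cast
    field_simp
  · rcases Nat.eq_zero_or_pos m with rfl | hm0
    · simp
    · have : n / m = 0 := Nat.div_eq_of_lt (by simp only [mem_Icc, not_and, not_le] at hm; omega)
      simp [riemannSum, inv_div, Nat.floor_div_eq_div, this]

theorem tendsto_riemannSum_natCast_div {h : ℝ → ℝ} (hh : ContinuousOn h (Set.Icc 0 1)) {m : ℕ}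
    (hm : m ≠ 0) :
    Tendsto (fun n : ℕ => riemannSum h (m / n)) atTop (𝓝 (∫ x in (0 : ℝ)..1, h x)) := by
  have hpos : ∀ᶠ n : ℕ in atTop, (m : ℝ) / n ∈ Set.Ioi 0 := by
    filter_upwards [eventually_gt_atTop 0] with n hn
    exact Set.mem_Ioi.mpr (div_pos (by positivity) (by positivity))
  exact (tendsto_riemannSum hh).comp
    (tendsto_nhdsWithin_iff.mpr ⟨tendsto_const_div_atTop_nhds_zero_nat _, hpos⟩)

theorem stmt_7 (f : ℝ → ℝ) (hf : ContinuousOn f (Set.Icc 0 1)) :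
    Filter.Tendsto
      (fun n : ℕ => (1 / (n : ℝ) ^ 2) * ∑ k ∈ Finset.Icc 1 n, f ((k : ℝ) / n) * (ArithmeticFunction.sigma 1 k : ℝ))
      Filter.atTop (nhds ((Real.pi ^ 2 / 6) * ∫ x in (0:ℝ)..1, x * f x)) := by
  set h : ℝ → ℝ := fun x => x * f x
  have hh : ContinuousOn h (Set.Icc 0 1) := continuousOn_id.mul hf
  obtain ⟨C, hC⟩ := isCompact_Icc.exists_bound_of_continuousOn hh
  have hlim : ∀ m : ℕ, Tendsto (fun n : ℕ => riemannSum h (m / n) / m ^ 2) atTop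
      (𝓝 ((∫ x in (0 : ℝ)..1, h x) / m ^ 2)) := by
    intro m
    rcases eq_or_ne m 0 with rfl | hm
    · simp
    · exact (tendsto_riemannSum_natCast_div hh hm).div_const _
  have hdom : ∀ n m : ℕ, ‖riemannSum h (m / n) / m ^ 2‖ ≤ C * (1 / m ^ 2) := by
    intro n m
    rw [norm_div, norm_pow, Real.norm_natCast, ← div_eq_mul_one_div, Real.norm_eq_abs]
    gcongr
    exact abs_riemannSum_le (by positivity) hC
  have hzeta : HasSum (fun m : ℕ => (∫ x in (0 : ℝ)..1, h x) / m ^ 2)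
      (Real.pi ^ 2 / 6 * ∫ x in (0 : ℝ)..1, h x) := by
    rw [mul_comm]
    simpa only [mul_one_div] using hasSum_zeta_two.mul_left (∫ x in (0 : ℝ)..1, h x)
  simp_rw [one_div_sq_mul_sum_mul_sigma_one_eq_tsum, ← hzeta.tsum_eq]
  exact tendsto_tsum_of_dominated_convergence
    ((Real.summable_one_div_nat_pow.mpr one_lt_two).mul_left C) hlim (Eventually.of_forall hdom)
end

section
/- For every real a > 0, the limit as n → ∞ of ∑_{k=1}^n σ(k)/(n² + a k²) equals (π²/(12a)) log(1+a). -/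
/-! Expanding `σ(k) = ∑_{dm = k} d` and summing over `m` first turns the sum into
`∑_m S_m(n)` with `S_m(n) = ∑_{d ≤ n/m} d / (n² + a m² d²)`. For fixed `m`, `S_m(n)` is a Riemann
sum with mesh `1/n` of `∫₀^{1/m} x / (1 + a m² x²) dx = log(1 + a) / (2 a m²)`; the integrand is
Lipschitz, so the error is `O(1/n)`. Since `S_m(n) ≤ 1/m²` uniformly in `n`, dominated convergence
for series gives the limit `log(1 + a) / (2a) · ζ(2)`. -/

open Filter Topology Finset Real intervalIntegral
open scoped NNReal

theorem abs_sub_integral_le_of_lipschitzWith {f : ℝ → ℝ} {K : ℝ≥0} (hf : LipschitzWith K f)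
    (x : ℝ) : |f (x + 1) - ∫ t in x..x + 1, f t| ≤ K := by
  have hconst : f (x + 1) = ∫ _ in x..x + 1, f (x + 1) := by simp
  rw [hconst, ← integral_sub intervalIntegrable_const (hf.continuous.intervalIntegrable _ _)]
  have hb : ∀ t ∈ Set.uIoc x (x + 1), ‖f (x + 1) - f t‖ ≤ K := by
    intro t ht
    rw [Set.uIoc_of_le (by linarith)] at ht
    calc ‖f (x + 1) - f t‖ ≤ K * |x + 1 - t| := hf.dist_le_mul (x + 1) t
      _ ≤ K * 1 := by gcongr; rw [abs_le]; constructor <;> linarith [ht.1, ht.2]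
      _ = K := mul_one _
  simpa using norm_integral_le_of_norm_le_const hb

theorem abs_sum_Icc_sub_integral_le_of_lipschitzWith {f : ℝ → ℝ} {K : ℝ≥0}
    (hf : LipschitzWith K f) (N : ℕ) :
    |∑ d ∈ Icc 1 N, f d - ∫ t in (0:ℝ)..N, f t| ≤ K * N := by
  induction N with
  | zero => simp
  | succ N ih =>
    rw [sum_Icc_succ_top (by omega), ← integral_add_adjacent_intervals
      (hf.continuous.intervalIntegrable 0 N) (hf.continuous.intervalIntegrable _ _)]
    push_cast
    calc _ = |(∑ d ∈ Icc 1 N, f d - ∫ t in (0:ℝ)..N, f t)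
            + (f (N + 1) - ∫ t in (N:ℝ)..N + 1, f t)| := by ring_nf
      _ ≤ K * N + K := (abs_add_le _ _).trans
          (add_le_add ih (abs_sub_integral_le_of_lipschitzWith hf N))
      _ = K * (N + 1) := by ring

theorem lipschitzWith_div_sq_add_mul_sq {s : ℝ≥0} (hs : s ≠ 0) {c : ℝ} (hc : 0 ≤ c) :
    LipschitzWith (s ^ 2)⁻¹ fun x : ℝ => x / (s ^ 2 + c * x ^ 2) := by
  refine LipschitzWith.of_dist_le_mul fun x y => ?_
  have hx : 0 < (s : ℝ) ^ 2 + c * x ^ 2 := by positivity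
  have hy : 0 < (s : ℝ) ^ 2 + c * y ^ 2 := by positivity
  have key : |(s : ℝ) ^ 2 - c * x * y| * s ^ 2 ≤ (s ^ 2 + c * x ^ 2) * (s ^ 2 + c * y ^ 2) := by
    have hcs : 0 ≤ c * s ^ 2 := by positivity
    rcases abs_cases ((s : ℝ) ^ 2 - c * x * y) with ⟨h, _⟩ | ⟨h, _⟩ <;> rw [h] <;>
      nlinarith [mul_nonneg hcs (sq_nonneg (x - y)), mul_nonneg hcs (sq_nonneg (x + y)),
        sq_nonneg (c * x * y)]
  rw [Real.dist_eq, Real.dist_eq, div_sub_div _ _ hx.ne' hy.ne',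
    show x * (s ^ 2 + c * y ^ 2) - (s ^ 2 + c * x ^ 2) * y = (x - y) * (s ^ 2 - c * x * y) by ring,
    abs_div, abs_mul, abs_of_pos (mul_pos hx hy), div_le_iff₀ (mul_pos hx hy),
    NNReal.coe_inv, NNReal.coe_pow]
  calc |x - y| * |(s : ℝ) ^ 2 - c * x * y|
      = ((s : ℝ) ^ 2)⁻¹ * |x - y| * (|(s : ℝ) ^ 2 - c * x * y| * s ^ 2) := by field_simp
    _ ≤ ((s : ℝ) ^ 2)⁻¹ * |x - y| * ((s ^ 2 + c * x ^ 2) * (s ^ 2 + c * y ^ 2)) := by gcongr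

theorem integral_div_sq_add_mul_sq {s c : ℝ} (hs : s ≠ 0) (hc : 0 < c) (T : ℝ) :
    ∫ x in (0:ℝ)..T, x / (s ^ 2 + c * x ^ 2) = log (1 + c * (T / s) ^ 2) / (2 * c) := by
  have hderiv : ∀ x : ℝ, HasDerivAt (fun x => log (1 + c * (x / s) ^ 2) / (2 * c))
      (x / (s ^ 2 + c * x ^ 2)) x := by
    intro x
    have hpos : 0 < 1 + c * (x / s) ^ 2 := by positivity
    have hinner : HasDerivAt (fun x => 1 + c * (x / s) ^ 2) (c * (2 * (x / s) * s⁻¹)) x := by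
      simpa using (((hasDerivAt_id x).div_const s).fun_pow 2).const_mul c |>.const_add 1
    refine ((hinner.log hpos.ne').div_const (2 * c)).congr_deriv ?_
    field_simp
  rw [integral_eq_sub_of_hasDerivAt (fun x _ => hderiv x)
    ((continuous_id.div (by fun_prop) fun x => by positivity).intervalIntegrable _ _)]
  simp

theorem abs_integral_div_sq_add_mul_sq_le {s c x₀ x₁ : ℝ} (hs : s ≠ 0) (hc : 0 ≤ c) (hx₀ : 0 ≤ x₀)
    (hx₀₁ : x₀ ≤ x₁) (hx₁ : x₁ ≤ x₀ + 1) :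
    |∫ x in x₀..x₁, x / (s ^ 2 + c * x ^ 2)| ≤ x₁ / s ^ 2 := by
  have hbound : ∀ x ∈ Set.uIoc x₀ x₁, ‖x / (s ^ 2 + c * x ^ 2)‖ ≤ x₁ / s ^ 2 := by
    intro x hx
    rw [Set.uIoc_of_le hx₀₁] at hx
    have hx0 : 0 ≤ x := hx₀.trans hx.1.le
    rw [Real.norm_eq_abs, abs_of_nonneg (by positivity)]
    calc x / (s ^ 2 + c * x ^ 2) ≤ x / s ^ 2 :=
          div_le_div_of_nonneg_left hx0 (by positivity) (le_add_of_nonneg_right (by positivity))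
      _ ≤ x₁ / s ^ 2 := by gcongr; exact hx.2
  refine (norm_integral_le_of_norm_le_const hbound).trans ?_
  calc x₁ / s ^ 2 * |x₁ - x₀| ≤ x₁ / s ^ 2 * 1 := by
        gcongr
        · exact div_nonneg (hx₀.trans hx₀₁) (sq_nonneg s)
        · rw [abs_le]; constructor <;> linarith
    _ = x₁ / s ^ 2 := mul_one _

theorem tendsto_sum_Icc_floor_div_sq_add_mul_sq {c t : ℝ} (hc : 0 < c) (ht : 0 ≤ t) :
    Tendsto (fun n : ℕ => ∑ d ∈ Icc 1 ⌊t * n⌋₊, (d : ℝ) / ((n : ℝ) ^ 2 + c * (d : ℝ) ^ 2))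
      atTop (𝓝 (log (1 + c * t ^ 2) / (2 * c))) := by
  rw [← tendsto_sub_nhds_zero_iff]
  refine squeeze_zero_norm' (a := fun n : ℕ => 2 * t / (n : ℝ)) ?_
    (tendsto_const_div_atTop_nhds_zero_nat _)
  filter_upwards [eventually_ge_atTop 1] with n hn
  have hn0 : (0 : ℝ) < n := by exact_mod_cast hn
  set φ : ℝ → ℝ := fun x => x / ((n : ℝ) ^ 2 + c * x ^ 2) with hφ
  set N := ⌊t * n⌋₊
  have hN : (N : ℝ) ≤ t * n := Nat.floor_le (by positivity)
  have hN' : t * n < N + 1 := Nat.lt_floor_add_one _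
  have hlip : LipschitzWith ((n : ℝ≥0) ^ 2)⁻¹ φ := by
    simpa using lipschitzWith_div_sq_add_mul_sq (s := n) (by positivity) hc.le
  have hriemann : |∑ d ∈ Icc 1 N, φ d - ∫ x in (0:ℝ)..N, φ x| ≤ t / n := by
    refine (abs_sum_Icc_sub_integral_le_of_lipschitzWith hlip N).trans ?_
    rw [NNReal.coe_inv, NNReal.coe_pow, NNReal.coe_natCast, inv_mul_le_iff₀ (by positivity)]
    calc (N : ℝ) ≤ t * n := hN
      _ = (n : ℝ) ^ 2 * (t / n) := by field_simp
  have htail : |∫ x in (N : ℝ)..t * n, φ x| ≤ t / n := by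
    refine (abs_integral_div_sq_add_mul_sq_le hn0.ne' hc.le (Nat.cast_nonneg N) hN hN'.le).trans ?_
    rw [sq, ← div_div, mul_div_cancel_right₀ _ hn0.ne']
  have hintegral : ∫ x in (0:ℝ)..t * n, φ x = log (1 + c * t ^ 2) / (2 * c) := by
    rw [hφ, integral_div_sq_add_mul_sq hn0.ne' hc, mul_div_cancel_right₀ _ hn0.ne']
  change |∑ d ∈ Icc 1 N, φ d - _| ≤ _
  rw [← hintegral, ← integral_add_adjacent_intervals
    (hlip.continuous.intervalIntegrable 0 N) (hlip.continuous.intervalIntegrable _ _)]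
  calc _ = |(∑ d ∈ Icc 1 N, φ d - ∫ x in (0:ℝ)..N, φ x) - ∫ x in (N : ℝ)..t * n, φ x| := by
        ring_nf
    _ ≤ t / n + t / n := (abs_sub _ _).trans (add_le_add hriemann htail)
    _ = 2 * t / n := by ring

theorem sum_Icc_sum_divisors_eq {M : Type*} [AddCommMonoid M] (F : ℕ → ℕ → M) (n : ℕ) :
    ∑ k ∈ Icc 1 n, ∑ d ∈ k.divisors, F d k = ∑ m ∈ Icc 1 n, ∑ d ∈ Icc 1 (n / m), F d (d * m) := by
  rw [sum_sigma', sum_sigma']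
  refine sum_nbij' (fun p => ⟨p.1 / p.2, p.2⟩) (fun p => ⟨p.2 * p.1, p.2⟩) ?_ ?_ ?_ ?_ ?_ <;>
    rintro ⟨x, d⟩ hp <;>
    simp only [mem_sigma, mem_Icc, Nat.mem_divisors] at hp ⊢
  · obtain ⟨⟨hk1, hkn⟩, ⟨m, rfl⟩, -⟩ := hp
    have hd : 0 < d := Nat.pos_of_mul_pos_right hk1
    have hm : 0 < m := Nat.pos_of_mul_pos_left hk1
    rw [Nat.mul_div_cancel_left m hd, Nat.le_div_iff_mul_le hm]
    exact ⟨⟨hm, le_trans (Nat.le_mul_of_pos_left m hd) hkn⟩, hd, hkn⟩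
  · obtain ⟨⟨hm, -⟩, hd, hdn⟩ := hp
    rw [Nat.le_div_iff_mul_le hm] at hdn
    exact ⟨⟨Nat.one_le_iff_ne_zero.2 (by positivity), hdn⟩, dvd_mul_right d x, by positivity⟩
  · simp [Nat.mul_div_cancel' hp.2.1]
  · simp [Nat.mul_div_cancel_left x hp.2.1]
  · rw [Nat.mul_div_cancel' hp.2.1]

theorem sum_Icc_sigma_div_eq_tsum (a : ℝ) (n : ℕ) :
    ∑ k ∈ Icc 1 n, (ArithmeticFunction.sigma 1 k : ℝ) / ((n : ℝ) ^ 2 + a * (k : ℝ) ^ 2) =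
      ∑' m : ℕ, ∑ d ∈ Icc 1 (n / m), (d : ℝ) / ((n : ℝ) ^ 2 + a * (m : ℝ) ^ 2 * (d : ℝ) ^ 2) := by
  simp_rw [ArithmeticFunction.sigma_one_apply, Nat.cast_sum, sum_div]
  rw [sum_Icc_sum_divisors_eq (fun d k => (d : ℝ) / ((n : ℝ) ^ 2 + a * (k : ℝ) ^ 2)),
    tsum_eq_sum (s := Icc 1 n)]
  · refine sum_congr rfl fun m _ => sum_congr rfl fun d _ => ?_
    push_cast
    ring
  · intro m hm
    rw [mem_Icc, not_and_or, not_le, Nat.lt_one_iff, not_le] at hm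
    rcases hm with rfl | hnm
    · simp
    · simp [Nat.div_eq_of_lt hnm]

theorem norm_sum_Icc_div_sq_add_mul_sq_le {a : ℝ} (ha : 0 ≤ a) (n m : ℕ) :
    ‖∑ d ∈ Icc 1 (n / m), (d : ℝ) / ((n : ℝ) ^ 2 + a * (m : ℝ) ^ 2 * (d : ℝ) ^ 2)‖ ≤
      1 / (m : ℝ) ^ 2 := by
  rcases n.eq_zero_or_pos with rfl | hn
  · simp
  have hn0 : (0 : ℝ) < n := by exact_mod_cast hn
  rw [Real.norm_of_nonneg (sum_nonneg fun d _ => by positivity)]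
  calc _ ≤ ∑ _d ∈ Icc 1 (n / m), ((n / m : ℕ) : ℝ) / (n : ℝ) ^ 2 := by
        refine sum_le_sum fun d hd => div_le_div₀ (by positivity) ?_ (by positivity)
          (le_add_of_nonneg_right (by positivity))
        exact_mod_cast (mem_Icc.1 hd).2
    _ = ((n / m : ℕ) : ℝ) ^ 2 / (n : ℝ) ^ 2 := by simp; ring
    _ ≤ ((n : ℝ) / m) ^ 2 / (n : ℝ) ^ 2 := by gcongr; exact Nat.cast_div_le
    _ = 1 / (m : ℝ) ^ 2 := by field_simp

-- At `m = 0` both sides are `0`, through the junk values `n / 0 = 0` and `1 / 0 = 0`.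
theorem tendsto_sum_Icc_div_sq_add_mul_sq {a : ℝ} (ha : 0 < a) (m : ℕ) :
    Tendsto (fun n : ℕ =>
      ∑ d ∈ Icc 1 (n / m), (d : ℝ) / ((n : ℝ) ^ 2 + a * (m : ℝ) ^ 2 * (d : ℝ) ^ 2))
      atTop (𝓝 (log (1 + a) / (2 * a) * (1 / (m : ℝ) ^ 2))) := by
  rcases m.eq_zero_or_pos with rfl | hm
  · simp
  convert tendsto_sum_Icc_floor_div_sq_add_mul_sq (c := a * m ^ 2) (t := 1 / m)
    (by positivity) (by positivity) using 3 with n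
  · rw [one_div_mul_eq_div, Nat.floor_div_eq_div]
  · field_simp

theorem stmt_8 (a : ℝ) (ha : 0 < a) :
    Filter.Tendsto
      (fun n : ℕ => ∑ k ∈ Finset.Icc 1 n, (ArithmeticFunction.sigma 1 k : ℝ) / ((n : ℝ) ^ 2 + a * (k : ℝ) ^ 2))
      Filter.atTop (nhds (Real.pi ^ 2 / (12 * a) * Real.log (1 + a))) := by
  have hdominated := tendsto_tsum_of_dominated_convergence
    (Real.summable_one_div_nat_pow.mpr one_lt_two) (tendsto_sum_Icc_div_sq_add_mul_sq ha)
    (Eventually.of_forall (norm_sum_Icc_div_sq_add_mul_sq_le ha.le))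
  rw [(hasSum_zeta_two.mul_left _).tsum_eq] at hdominated
  simp_rw [sum_Icc_sigma_div_eq_tsum a]
  convert hdominated using 2
  field_simp
  ring
end

section
/- For every α ≥ 0, (1/n^(α+1)) ∑_{k=1}^n k^(α-1) log(k/n) φ(k) converges to −6/(π²(α+1)²). -/
/-!
Put `T n = ∑_{k ≤ n} k ^ (α - 1) * log (k / n) * φ k`. As `log (k / (n + 1)) - log (k / n)`
does not depend on `k`, the increment `T (n + 1) - T n` is `-log (1 + 1 / n) * A n` with
`A n = ∑_{k ≤ n} k ^ (α - 1) * φ k`, so by Stolz–Cesàro against `n ^ (α + 1)` it suffices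
that `A n ~ 6 / π ^ 2 * n ^ (α + 1) / (α + 1)`. From `φ = μ ⋆ id`,
`A n = ∑_d μ d * d ^ (α - 1) * ∑_{m ≤ n / d} m ^ α`; each inner sum is asymptotic to
`(n / d) ^ (α + 1) / (α + 1)` and bounded by `(n / d) ^ (α + 1)`, so dominated convergence
over `d` gives the limit `(∑ μ d / d ^ 2) / (α + 1) = 6 / (π ^ 2 * (α + 1))`.
-/

open Finset Filter Real Topology Asymptotics
open scoped ArithmeticFunction.Moebius Nat

theorem tendsto_div_of_tendsto_sub_div_sub {u v : ℕ → ℝ} {l : ℝ} (hv : StrictMono v)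
    (hv_top : Tendsto v atTop atTop)
    (h : Tendsto (fun n => (u (n + 1) - u n) / (v (n + 1) - v n)) atTop (𝓝 l)) :
    Tendsto (fun n => u n / v n) atTop (𝓝 l) := by
  set w := fun n => u n - l * v n
  have hdv : ∀ n, 0 < v (n + 1) - v n := fun n => sub_pos.2 (hv n.lt_succ_self)
  have hstep : (fun n => w (n + 1) - w n) =o[atTop] fun n => v (n + 1) - v n := by
    rw [isLittleO_iff_tendsto fun n h => absurd h (hdv n).ne']
    refine (sub_self l ▸ h.sub_const l).congr fun n => ?_
    field_simp [(hdv n).ne']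
    ring
  have hsum := hstep.sum_range (fun n => (hdv n).le) (by
    rw [funext fun n => sum_range_sub v n]
    simpa only [sub_eq_add_neg] using tendsto_atTop_add_const_right _ _ hv_top)
  simp only [sum_range_sub] at hsum
  have hconst : ∀ c : ℝ, (fun _ : ℕ => c) =o[atTop] v := fun c =>
    isLittleO_const_left.2 (Or.inr (tendsto_norm_atTop_atTop.comp hv_top))
  have hw : w =o[atTop] v := by
    simpa using (hsum.trans_isBigO ((isBigO_refl v atTop).sub (hconst (v 0)).isBigO)).add
      (hconst (w 0))
  refine (zero_add l ▸ hw.tendsto_div_nhds_zero.add_const l).congr' ?_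
  filter_upwards [hv_top.eventually_ne_atTop 0] with n hn
  field_simp [w]
  ring

lemma tendsto_rpow_sub_one_div_sub_one (p : ℝ) :
    Tendsto (fun x : ℝ => (x ^ p - 1) / (x - 1)) (𝓝[≠] 1) (𝓝 p) := by
  convert (hasDerivAt_rpow_const (x := 1) (p := p) (Or.inl one_ne_zero)).tendsto_slope using 1
  · ext x
    rw [slope_def_field, one_rpow]
  · rw [one_rpow, mul_one]

lemma tendsto_succ_rpow_sub_rpow_div_rpow (p : ℝ) :
    Tendsto (fun n : ℕ => (((n : ℝ) + 1) ^ p - (n : ℝ) ^ p) / (n : ℝ) ^ (p - 1)) atTop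
      (𝓝 p) := by
  have hx : Tendsto (fun n : ℕ => 1 + 1 / (n : ℝ)) atTop (𝓝[≠] 1) := by
    refine tendsto_nhdsWithin_iff.2 ⟨?_, ?_⟩
    · simpa using tendsto_one_div_atTop_nhds_zero_nat.const_add (1 : ℝ)
    · filter_upwards [eventually_gt_atTop 0] with n hn
      simp [hn.ne']
  refine ((tendsto_rpow_sub_one_div_sub_one p).comp hx).congr' ?_
  filter_upwards [eventually_gt_atTop 0] with n hn
  have hn : (0 : ℝ) < n := Nat.cast_pos.2 hn
  rw [Function.comp_apply, one_add_div hn.ne', div_rpow (by positivity) hn.le,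
    rpow_sub_one hn.ne']
  field_simp
  ring

lemma tendsto_div_rpow_of_tendsto_sub_div_rpow {u : ℕ → ℝ} {p l : ℝ} (hp : 0 < p)
    (h : Tendsto (fun n => (u (n + 1) - u n) / (n : ℝ) ^ (p - 1)) atTop (𝓝 l)) :
    Tendsto (fun n => u n / (n : ℝ) ^ p) atTop (𝓝 (l / p)) := by
  refine tendsto_div_of_tendsto_sub_div_sub
    (strictMono_nat_of_lt_succ fun n => rpow_lt_rpow n.cast_nonneg (by simp) hp)
    ((tendsto_rpow_atTop hp).comp tendsto_natCast_atTop_atTop)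
    ((h.div (tendsto_succ_rpow_sub_rpow_div_rpow p) hp.ne').congr' ?_)
  filter_upwards [eventually_gt_atTop 0] with n hn
  have hn : (0 : ℝ) < (n : ℝ) ^ (p - 1) := rpow_pos_of_pos (Nat.cast_pos.2 hn) _
  simp only [Pi.div_apply, Nat.cast_add_one]
  field_simp

noncomputable def sumRpow (s : ℝ) (N : ℕ) : ℝ := ∑ m ∈ Ioc 0 N, (m : ℝ) ^ s

lemma sumRpow_le_rpow {s : ℝ} (hs : 0 ≤ s) (N : ℕ) : sumRpow s N ≤ (N : ℝ) ^ (s + 1) := by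
  calc sumRpow s N ≤ ∑ _m ∈ Ioc 0 N, (N : ℝ) ^ s :=
        sum_le_sum fun m hm => rpow_le_rpow m.cast_nonneg (by simpa using (mem_Ioc.1 hm).2) hs
    _ = (N : ℝ) ^ (s + 1) := by
        rcases N.eq_zero_or_pos with rfl | hN
        · simp [zero_rpow (by linarith : s + 1 ≠ 0)]
        · simp [rpow_add_one (Nat.cast_pos.2 hN).ne', mul_comm]

lemma tendsto_sumRpow_div_rpow {s : ℝ} (hs : -1 < s) :
    Tendsto (fun N : ℕ => sumRpow s N / (N : ℝ) ^ (s + 1)) atTop (𝓝 (1 / (s + 1))) := by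
  have h : Tendsto (fun N : ℕ => 1 + 1 / (N : ℝ)) atTop (𝓝 1) := by
    simpa using tendsto_one_div_atTop_nhds_zero_nat.const_add (1 : ℝ)
  refine tendsto_div_rpow_of_tendsto_sub_div_rpow (by linarith)
    ((one_rpow s ▸ h.rpow_const (Or.inl one_ne_zero)).congr' ?_)
  filter_upwards [eventually_gt_atTop 0] with N hN
  have hN : (0 : ℝ) < N := Nat.cast_pos.2 hN
  rw [sumRpow, sumRpow, sum_Ioc_succ_top N.zero_le, add_sub_cancel_left, add_sub_cancel_right,
    one_add_div hN.ne', div_rpow (by positivity) hN.le, Nat.cast_add_one]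

lemma tendsto_sumRpow_floor_div_rpow {s : ℝ} (hs : -1 < s) :
    Tendsto (fun x : ℝ => sumRpow s ⌊x⌋₊ / x ^ (s + 1)) atTop (𝓝 (1 / (s + 1))) := by
  have hfloor : Tendsto (fun x : ℝ => ((⌊x⌋₊ : ℝ) / x) ^ (s + 1)) atTop (𝓝 1) := by
    simpa using tendsto_nat_floor_div_atTop.rpow_const (p := s + 1) (Or.inl one_ne_zero)
  refine (mul_one (1 / (s + 1)) ▸
    ((tendsto_sumRpow_div_rpow hs).comp tendsto_nat_floor_atTop).mul hfloor).congr' ?_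
  filter_upwards [eventually_ge_atTop 1] with x hx
  have hfl : (0 : ℝ) < ⌊x⌋₊ := Nat.cast_pos.2 (Nat.floor_pos.2 hx)
  rw [Function.comp_apply, div_rpow hfl.le (by linarith)]
  field_simp [(rpow_pos_of_pos hfl (s + 1)).ne']

lemma totient_eq_sum_moebius_mul (k : ℕ) :
    (φ k : ℝ) = ∑ x ∈ k.divisorsAntidiagonal, (μ x.1 : ℝ) * x.2 := by
  rcases k.eq_zero_or_pos with rfl | hk
  · simp
  refine ((ArithmeticFunction.sum_eq_iff_sum_mul_moebius_eq (f := fun k => (φ k : ℝ))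
    (g := fun k => (k : ℝ))).1 (fun m _ => ?_) k hk).symm
  exact_mod_cast Nat.sum_totient m

lemma sum_rpow_mul_totient_eq (s : ℝ) (n : ℕ) :
    ∑ k ∈ Ioc 0 n, (k : ℝ) ^ s * φ k =
      ∑ d ∈ Ioc 0 n, μ d * (d : ℝ) ^ s * sumRpow (s + 1) (n / d) := by
  let f : ArithmeticFunction ℝ := ⟨fun d => μ d * (d : ℝ) ^ s, by simp⟩
  -- `e * e ^ s` rather than `e ^ (s + 1)`, which is `1` at `e = 0` when `s = -1`
  let g : ArithmeticFunction ℝ := ⟨fun e => e * (e : ℝ) ^ s, by simp⟩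
  have hfg (k : ℕ) : (f * g) k = (k : ℝ) ^ s * φ k := by
    rw [ArithmeticFunction.mul_apply, totient_eq_sum_moebius_mul, mul_sum]
    refine sum_congr rfl fun x hx => ?_
    rw [← (Nat.mem_divisorsAntidiagonal.1 hx).1, Nat.cast_mul,
      mul_rpow x.1.cast_nonneg x.2.cast_nonneg]
    change (μ x.1 : ℝ) * (x.1 : ℝ) ^ s * ((x.2 : ℝ) * (x.2 : ℝ) ^ s) = _
    ring
  simp_rw [← hfg, ArithmeticFunction.sum_Ioc_mul_eq_sum_sum, sumRpow, mul_sum]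
  refine sum_congr rfl fun d _ => sum_congr rfl fun e he => ?_
  change (μ d : ℝ) * (d : ℝ) ^ s * ((e : ℝ) * (e : ℝ) ^ s) = _
  rw [rpow_add_one (Nat.cast_pos.2 (mem_Ioc.1 he).1).ne']
  ring

lemma tsum_moebius_div_sq : ∑' d : ℕ, (μ d : ℝ) / (d : ℝ) ^ 2 = 6 / π ^ 2 := by
  have h := ArithmeticFunction.LSeries_zeta_mul_Lseries_moebius (s := 2) (by norm_num)
  rw [ArithmeticFunction.LSeries_zeta_eq_riemannZeta (by norm_num), riemannZeta_two,
    LSeries] at h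
  apply Complex.ofReal_injective
  rw [Complex.ofReal_tsum]
  have hterm (d : ℕ) :
      LSeries.term (fun n => (μ n : ℂ)) 2 d = ((μ d / (d : ℝ) ^ 2 : ℝ) : ℂ) := by
    rcases d.eq_zero_or_pos with rfl | hd
    · simp
    · simp [LSeries.term_of_ne_zero hd.ne']
  simp_rw [← hterm]
  push_cast
  field_simp
  linear_combination 6 * h

lemma tendsto_sum_rpow_mul_totient_div {α : ℝ} (hα : 0 ≤ α) :
    Tendsto (fun n : ℕ => (∑ k ∈ Ioc 0 n, (k : ℝ) ^ (α - 1) * φ k) / (n : ℝ) ^ (α + 1)) atTop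
      (𝓝 (6 / π ^ 2 / (α + 1))) := by
  set F : ℕ → ℕ → ℝ :=
    fun n d => μ d / (d : ℝ) ^ 2 * (sumRpow α (n / d) / ((n : ℝ) / d) ^ (α + 1))
  have hlim (d : ℕ) : Tendsto (F · d) atTop (𝓝 (μ d / (d : ℝ) ^ 2 * (1 / (α + 1)))) := by
    rcases d.eq_zero_or_pos with rfl | hd
    · simp [F]
    refine tendsto_const_nhds.mul (((tendsto_sumRpow_floor_div_rpow (by linarith)).comp
      (tendsto_natCast_atTop_atTop.atTop_div_const (Nat.cast_pos.2 hd))).congr fun n => ?_)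
    simp [Nat.floor_div_eq_div]
  have hbound (n d : ℕ) : ‖F n d‖ ≤ 1 / (d : ℝ) ^ 2 := by
    have hS : sumRpow α (n / d) ≤ ((n : ℝ) / d) ^ (α + 1) :=
      (sumRpow_le_rpow hα _).trans
        (rpow_le_rpow (Nat.cast_nonneg _) Nat.cast_div_le (by linarith))
    have hS₀ : 0 ≤ sumRpow α (n / d) := sum_nonneg fun m _ => by positivity
    calc ‖F n d‖
        = |(μ d : ℝ)| / (d : ℝ) ^ 2 * (sumRpow α (n / d) / ((n : ℝ) / d) ^ (α + 1)) := by
          rw [Real.norm_eq_abs, abs_mul, abs_div, abs_div, abs_of_nonneg hS₀,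
            abs_of_nonneg (rpow_nonneg (by positivity) _), abs_pow, Nat.abs_cast]
      _ ≤ 1 / (d : ℝ) ^ 2 * 1 := by
          gcongr
          · exact_mod_cast ArithmeticFunction.abs_moebius_le_one
          · exact div_le_one_of_le₀ hS (by positivity)
      _ = 1 / (d : ℝ) ^ 2 := mul_one _
  have hF := tendsto_tsum_of_dominated_convergence
    (Real.summable_one_div_nat_pow.2 one_lt_two) hlim (Eventually.of_forall hbound)
  rw [tsum_mul_right, tsum_moebius_div_sq, ← div_eq_mul_one_div] at hF
  refine hF.congr' ?_
  filter_upwards [eventually_gt_atTop 0] with n hn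
  have hn : (0 : ℝ) < n := Nat.cast_pos.2 hn
  rw [sum_rpow_mul_totient_eq, sub_add_cancel, sum_div, tsum_eq_sum (s := Ioc 0 n)]
  · refine sum_congr rfl fun d hd => ?_
    have hd : (0 : ℝ) < d := Nat.cast_pos.2 (mem_Ioc.1 hd).1
    have hd2 : (d : ℝ) ^ (α + 1) = (d : ℝ) ^ (α - 1) * (d : ℝ) ^ 2 := by
      rw [← rpow_natCast, ← rpow_add hd]
      norm_num [sub_add]
    simp only [F, div_rpow hn.le hd.le, hd2]
    field_simp
  · intro d hd
    rcases d.eq_zero_or_pos with rfl | hd0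
    · simp [F]
    · simp [F, sumRpow, Nat.div_eq_of_lt (not_le.1 fun h => hd (mem_Ioc.2 ⟨hd0, h⟩))]

lemma sum_mul_log_div_succ_sub (w : ℕ → ℝ) (n : ℕ) :
    ∑ k ∈ Icc 1 (n + 1), w k * log (k / (n + 1 : ℕ)) - ∑ k ∈ Icc 1 n, w k * log (k / n) =
      -log (1 + 1 / n) * ∑ k ∈ Icc 1 n, w k := by
  rw [sum_Icc_succ_top (Nat.le_add_left 1 n), div_self (by positivity), log_one, mul_zero,
    add_zero, mul_sum, ← sum_sub_distrib]
  refine sum_congr rfl fun k hk => ?_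
  have hk₀ : (0 : ℝ) < k := Nat.cast_pos.2 (mem_Icc.1 hk).1
  have hn : (0 : ℝ) < n := hk₀.trans_le (Nat.cast_le.2 (mem_Icc.1 hk).2)
  rw [one_add_div hn.ne', log_div hk₀.ne' (by positivity), log_div hk₀.ne' hn.ne',
    log_div (by positivity) hn.ne', Nat.cast_add_one]
  ring

theorem stmt_10 (α : ℝ) (hα : 0 ≤ α) :
    Filter.Tendsto
      (fun n : ℕ => (1 / (n : ℝ) ^ (α + 1)) *
        ∑ k ∈ Finset.Icc 1 n, (k : ℝ) ^ (α - 1) * Real.log ((k : ℝ) / n) * Nat.totient k)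
      Filter.atTop (nhds (-(6 / (Real.pi ^ 2 * (α + 1) ^ 2)))) := by
  have hα' : 0 < α + 1 := by linarith
  have hlog : Tendsto (fun n : ℕ => (n : ℝ) * log (1 + 1 / n)) atTop (𝓝 1) :=
    (tendsto_mul_log_one_add_div_atTop 1).comp tendsto_natCast_atTop_atTop
  have key := tendsto_div_rpow_of_tendsto_sub_div_rpow
    (u := fun n => ∑ k ∈ Icc 1 n, (k : ℝ) ^ (α - 1) * log (k / n) * φ k) hα'
    ((hlog.mul (tendsto_sum_rpow_mul_totient_div hα)).neg.congr' ?_)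
  · convert key using 1
    · exact funext fun n => one_div_mul_eq_div _ _
    · field_simp
  · filter_upwards [eventually_gt_atTop 0] with n hn
    have hn : (0 : ℝ) < n := Nat.cast_pos.2 hn
    simp only [mul_right_comm _ (log _)]
    rw [sum_mul_log_div_succ_sub, add_sub_cancel_right, rpow_add_one hn.ne',
      show Icc 1 n = Ioc 0 n from Icc_add_one_left_eq_Ioc 0 n]
    field_simp
end

section
/- For every α ≥ 0, (1/n^(α+1)) ∑_{k=1}^n k^(α-1) (log k) φ(k) − 6((1+α) log n − 1)/(π²(1+α)²) converges to 0 as n → ∞. -/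
/-!
Write c = 6/π². Möbius inversion gives φ(k)/k = ∑_{d ∣ k} μ(d)/d, hence
∑_{k ≤ n} φ(k)/k = ∑_{d ≤ n} (μ(d)/d) ⌊n/d⌋ = c n + O(log n): the floors cost a harmonic
sum and the tail of ∑ μ(d)/d² = 1/ζ(2) costs at most ∑_{d > n} 1/d² ≤ 1/n. An error
O(log n), and not merely o(n), is what survives Abel summation against the increasing weight
k^α log k: ∑_{k ≤ n} k^α log k · φ(k)/k = c ∑_{k ≤ n} k^α log k + O(n^α log² n). Comparing
the last sum with ∫_1^n t^α log t dt = n^(α+1) (log n/(α+1) - 1/(α+1)²) + 1/(α+1)² costs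
O(n^α log n), and after division by n^(α+1) only the stated main term is left.
-/

open Filter Finset Real
open scoped Nat ArithmeticFunction.Moebius LSeries.notation

theorem abs_moebius_div_sq_le (d : ℕ) : |(μ d : ℝ) / d ^ 2| ≤ ((d : ℝ) ^ 2)⁻¹ := by
  rw [abs_div, abs_of_nonneg (sq_nonneg (d : ℝ)), div_eq_mul_inv]
  exact mul_le_of_le_one_left (inv_nonneg.mpr (sq_nonneg _))
    (mod_cast ArithmeticFunction.abs_moebius_le_one)

theorem hasSum_moebius_div_sq : HasSum (fun d : ℕ => (μ d : ℝ) / d ^ 2) (6 / π ^ 2) := by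
  have hs : 1 < (2 : ℂ).re := by norm_num
  have hL : L ↗μ 2 = ((6 / π ^ 2 : ℝ) : ℂ) := by
    have h := ArithmeticFunction.LSeries_zeta_mul_Lseries_moebius hs
    rw [ArithmeticFunction.LSeries_zeta_eq_riemannZeta hs, riemannZeta_two] at h
    have hπ : (π : ℂ) ≠ 0 := Complex.ofReal_ne_zero.mpr pi_ne_zero
    push_cast
    field_simp
    linear_combination 6 * h
  have h : HasSum _ (L ↗μ 2) := (ArithmeticFunction.LSeriesSummable_moebius_iff.mpr hs).hasSum
  rw [hL] at h
  refine Complex.hasSum_ofReal.mp (h.congr_fun fun d => ?_)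
  rcases eq_or_ne d 0 with rfl | hd
  · simp
  · simp [LSeries.term_of_ne_zero hd]

theorem abs_sum_moebius_div_sq_sub_le {n : ℕ} (hn : n ≠ 0) :
    |∑ d ∈ Ioc 0 n, (μ d : ℝ) / d ^ 2 - 6 / π ^ 2| ≤ (n : ℝ)⁻¹ := by
  have hlim : Tendsto (fun m => ∑ d ∈ Ioc 0 m, (μ d : ℝ) / d ^ 2) atTop
      (nhds (6 / π ^ 2)) := by
    refine (hasSum_moebius_div_sq.tendsto_sum_nat.comp (tendsto_add_atTop_nat 1)).congr
      fun m => ?_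
    rw [Function.comp_apply, Nat.range_succ_eq_Icc_zero,
      ← add_sum_Ioc_eq_sum_Icc (Nat.zero_le m)]
    simp
  refine le_of_tendsto ((tendsto_const_nhds.sub hlim).abs) ?_
  filter_upwards [eventually_ge_atTop n] with m hm
  rw [abs_sub_comm, ← sum_Ioc_consecutive _ (Nat.zero_le n) hm, add_sub_cancel_left]
  calc |∑ d ∈ Ioc n m, (μ d : ℝ) / d ^ 2| ≤ ∑ d ∈ Ioc n m, ((d : ℝ) ^ 2)⁻¹ :=
        (abs_sum_le_sum_abs _ _).trans (sum_le_sum fun d _ => abs_moebius_div_sq_le d)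
    _ ≤ (n : ℝ)⁻¹ - (m : ℝ)⁻¹ := sum_Ioc_inv_sq_le_sub hn hm
    _ ≤ (n : ℝ)⁻¹ := sub_le_self _ (by positivity)

theorem totient_div_self_eq_sum_moebius_div {k : ℕ} (hk : k ≠ 0) :
    (φ k : ℝ) / k = ∑ d ∈ k.divisors, (μ d : ℝ) / d := by
  have hinv := (ArithmeticFunction.sum_eq_iff_sum_mul_moebius_eq (R := ℝ)
    (f := fun i => (φ i : ℝ)) (g := fun i => (i : ℝ))).mp
    (fun n _ => mod_cast Nat.sum_totient n) k (Nat.pos_of_ne_zero hk)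
  rw [← hinv, sum_div, ← Nat.sum_divisorsAntidiagonal (f := fun d _ => (μ d : ℝ) / d)]
  refine sum_congr rfl fun x hx => ?_
  obtain ⟨rfl, -⟩ := Nat.mem_divisorsAntidiagonal.mp hx
  have : (x.2 : ℝ) ≠ 0 := by exact_mod_cast right_ne_zero_of_mul hk
  push_cast
  field_simp

theorem sum_Ioc_totient_div_self_eq (n : ℕ) :
    ∑ k ∈ Ioc 0 n, (φ k : ℝ) / k = ∑ d ∈ Ioc 0 n, (μ d : ℝ) / d * (n / d : ℕ) := by
  let f : ArithmeticFunction ℝ := ⟨fun d => (μ d : ℝ) / d, by simp⟩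
  refine (sum_congr rfl fun k hk => ?_).trans (ArithmeticFunction.sum_Ioc_mul_zeta_eq_sum f n)
  rw [ArithmeticFunction.coe_mul_zeta_apply,
    totient_div_self_eq_sum_moebius_div (mem_Ioc.mp hk).1.ne']
  rfl

theorem abs_natCast_div_sub_div_le_one (n d : ℕ) : |((n / d : ℕ) : ℝ) - n / d| ≤ 1 := by
  rw [← Nat.floor_div_eq_div (K := ℝ), abs_sub_le_iff]
  have h := Nat.lt_floor_add_one ((n : ℝ) / d)
  have h' := Nat.floor_le (by positivity : (0 : ℝ) ≤ n / d)
  constructor <;> linarith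

theorem abs_moebius_div_mul_sub_le (n d : ℕ) :
    |(μ d : ℝ) / d * (n / d : ℕ) - n * ((μ d : ℝ) / d ^ 2)| ≤ (d : ℝ)⁻¹ := by
  have hμ : |(μ d : ℝ)| ≤ 1 := mod_cast ArithmeticFunction.abs_moebius_le_one
  calc |(μ d : ℝ) / d * (n / d : ℕ) - n * ((μ d : ℝ) / d ^ 2)|
      = |(μ d : ℝ) * (d : ℝ)⁻¹ * (((n / d : ℕ) : ℝ) - n / d)| := by ring_nf
    _ = |(μ d : ℝ)| * (d : ℝ)⁻¹ * |((n / d : ℕ) : ℝ) - n / d| := by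
        rw [abs_mul, abs_mul, abs_inv, Nat.abs_cast]
    _ ≤ 1 * (d : ℝ)⁻¹ * 1 := by
        gcongr
        exact abs_natCast_div_sub_div_le_one n d
    _ = (d : ℝ)⁻¹ := by ring

theorem abs_sum_Ioc_totient_div_self_sub_le (n : ℕ) :
    |∑ k ∈ Ioc 0 n, (φ k : ℝ) / k - 6 / π ^ 2 * n| ≤ log n + 2 := by
  rcases eq_or_ne n 0 with rfl | hn
  · norm_num
  have hsplit : ∑ d ∈ Ioc 0 n, (μ d : ℝ) / d * (n / d : ℕ) - 6 / π ^ 2 * n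
      = ∑ d ∈ Ioc 0 n, ((μ d : ℝ) / d * (n / d : ℕ) - n * ((μ d : ℝ) / d ^ 2))
        + n * (∑ d ∈ Ioc 0 n, (μ d : ℝ) / d ^ 2 - 6 / π ^ 2) := by
    rw [sum_sub_distrib, ← mul_sum]
    ring
  have hfloor : |∑ d ∈ Ioc 0 n, ((μ d : ℝ) / d * (n / d : ℕ) - n * ((μ d : ℝ) / d ^ 2))|
      ≤ log n + 1 :=
    calc _ ≤ ∑ d ∈ Ioc 0 n, (d : ℝ)⁻¹ :=
          (abs_sum_le_sum_abs _ _).trans (sum_le_sum fun d _ => abs_moebius_div_mul_sub_le n d)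
      _ = harmonic n := by
          rw [harmonic_eq_sum_Icc]
          push_cast
          rfl
      _ ≤ log n + 1 := by linarith [harmonic_le_one_add_log n]
  have htail : |(n : ℝ) * (∑ d ∈ Ioc 0 n, (μ d : ℝ) / d ^ 2 - 6 / π ^ 2)| ≤ 1 := by
    rw [abs_mul, Nat.abs_cast]
    calc (n : ℝ) * _ ≤ n * (n : ℝ)⁻¹ := by gcongr; exact abs_sum_moebius_div_sq_sub_le hn
      _ = 1 := mul_inv_cancel₀ (Nat.cast_ne_zero.mpr hn)
  rw [sum_Ioc_totient_div_self_eq, hsplit]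
  exact (abs_add_le _ _).trans (by linarith)

theorem MonotoneOn.abs_sum_Ioc_sub_integral_le {F : ℝ → ℝ} {a b : ℕ} (hab : a ≤ b)
    (hF : MonotoneOn F (Set.Icc a b)) :
    |∑ k ∈ Ioc a b, F k - ∫ x in a..b, F x| ≤ F b - F a := by
  have hlow := hF.sum_le_integral_Ico hab
  have hupp := hF.integral_le_sum_Ico hab
  have hshift : ∑ k ∈ Ico a b, F ↑(k + 1) = ∑ k ∈ Ioc a b, F k := by
    rw [← Ico_add_one_add_one_eq_Ioc, ← sum_Ico_add' (fun k : ℕ => F k)]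
  have hends : ∑ k ∈ Ioc a b, F k + F a = ∑ k ∈ Ico a b, F k + F b := by
    rw [sum_Ioc_add_eq_sum_Icc hab, sum_Ico_add_eq_sum_Icc hab]
  rw [abs_le]
  constructor <;> linarith

theorem sum_Ioc_mul_sub_const_mul_sum_eq (f a : ℕ → ℝ) (c : ℝ) (n : ℕ) :
    ∑ k ∈ Ioc 0 n, f k * a k - c * ∑ k ∈ Ioc 0 n, f k
      = f n * (∑ k ∈ Ioc 0 n, a k - c * n)
        - ∑ m ∈ range n, (f (m + 1) - f m) * (∑ k ∈ Ioc 0 m, a k - c * m) := by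
  induction n with
  | zero => simp
  | succ n ih =>
    rw [sum_Ioc_succ_top (Nat.zero_le n), sum_Ioc_succ_top (Nat.zero_le n),
      sum_Ioc_succ_top (Nat.zero_le n), sum_range_succ]
    push_cast
    linear_combination ih

theorem abs_sum_Ioc_mul_sub_const_mul_sum_le {f a : ℕ → ℝ} {c B : ℝ} {n : ℕ}
    (hf : Monotone f) (hf0 : 0 ≤ f 0) (hB : ∀ m ≤ n, |∑ k ∈ Ioc 0 m, a k - c * m| ≤ B) :
    |∑ k ∈ Ioc 0 n, f k * a k - c * ∑ k ∈ Ioc 0 n, f k| ≤ 2 * B * f n := by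
  have hfn : 0 ≤ f n := hf0.trans (hf (Nat.zero_le n))
  have hlast : |f n * (∑ k ∈ Ioc 0 n, a k - c * n)| ≤ B * f n := by
    rw [abs_mul, abs_of_nonneg hfn, mul_comm]
    exact mul_le_mul_of_nonneg_right (hB n le_rfl) hfn
  have hsteps :
      |∑ m ∈ range n, (f (m + 1) - f m) * (∑ k ∈ Ioc 0 m, a k - c * m)| ≤ B * f n :=
    calc _ ≤ ∑ m ∈ range n, (f (m + 1) - f m) * B := by
          refine (abs_sum_le_sum_abs _ _).trans (sum_le_sum fun m hm => ?_)
          have hstep : 0 ≤ f (m + 1) - f m := sub_nonneg.mpr (hf m.le_succ)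
          rw [abs_mul, abs_of_nonneg hstep]
          exact mul_le_mul_of_nonneg_left (hB m (mem_range.mp hm).le) hstep
      _ = (f n - f 0) * B := by rw [← sum_mul, sum_range_sub]
      _ ≤ B * f n := by nlinarith [(abs_nonneg _).trans (hB 0 (Nat.zero_le n))]
  rw [sum_Ioc_mul_sub_const_mul_sum_eq]
  linarith [abs_sub _ _ |>.trans (add_le_add hlast hsteps)]

theorem monotoneOn_rpow_mul_log {α : ℝ} (hα : 0 ≤ α) :
    MonotoneOn (fun x : ℝ => x ^ α * log x) (Set.Ici 1) := by
  intro x (hx : 1 ≤ x) y (hy : 1 ≤ y) hxy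
  have hx0 : 0 ≤ x := zero_le_one.trans hx
  exact mul_le_mul (rpow_le_rpow hx0 hxy hα) (log_le_log (by linarith) hxy) (log_nonneg hx)
    (rpow_nonneg (hx0.trans hxy) α)

theorem monotone_natCast_rpow_mul_log {α : ℝ} (hα : 0 ≤ α) :
    Monotone (fun k : ℕ => (k : ℝ) ^ α * log k) := by
  intro i j hij
  rcases Nat.eq_zero_or_pos i with rfl | hi
  · simpa using mul_nonneg (rpow_nonneg (Nat.cast_nonneg j) α) (log_natCast_nonneg j)
  · exact monotoneOn_rpow_mul_log hα (Set.mem_Ici.mpr (Nat.one_le_cast.mpr hi))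
      (Set.mem_Ici.mpr (Nat.one_le_cast.mpr (hi.trans_le hij))) (Nat.cast_le.mpr hij)

theorem integral_rpow_mul_log {α x : ℝ} (hα : α ≠ -1) (hx : 0 < x) :
    ∫ t in (1 : ℝ)..x, t ^ α * log t
      = x ^ (α + 1) * log x / (α + 1) - x ^ (α + 1) / (α + 1) ^ 2 + 1 / (α + 1) ^ 2 := by
  have hα1 : α + 1 ≠ 0 := fun h => hα (eq_neg_of_add_eq_zero_left h)
  have hpos : ∀ t ∈ Set.uIcc (1 : ℝ) x, 0 < t := fun t ht =>
    lt_of_lt_of_le (lt_min one_pos hx) ht.1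
  have hderiv : ∀ t ∈ Set.uIcc (1 : ℝ) x, HasDerivAt
      (fun t : ℝ => t ^ (α + 1) * log t / (α + 1) - t ^ (α + 1) / (α + 1) ^ 2)
      (t ^ α * log t) t := by
    intro t ht
    have ht0 := hpos t ht
    have hrpow : HasDerivAt (fun t : ℝ => t ^ (α + 1)) ((α + 1) * t ^ α) t := by
      simpa using hasDerivAt_rpow_const (p := α + 1) (Or.inl ht0.ne')
    refine (((hrpow.mul (hasDerivAt_log ht0.ne')).div_const (α + 1)).sub
      (hrpow.div_const ((α + 1) ^ 2))).congr_deriv ?_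
    rw [rpow_add ht0, rpow_one]
    field_simp
    ring
  have hint : IntervalIntegrable (fun t : ℝ => t ^ α * log t) MeasureTheory.volume 1 x :=
    ContinuousOn.intervalIntegrable fun t ht =>
      ((continuousAt_id.rpow_const (Or.inl (hpos t ht).ne')).mul
        (continuousAt_log (hpos t ht).ne')).continuousWithinAt
  rw [intervalIntegral.integral_eq_sub_of_hasDerivAt hderiv hint, one_rpow, log_one]
  ring

theorem abs_sum_rpow_mul_log_mul_totient_div_self_sub_le {α : ℝ} (hα : 0 ≤ α) {n : ℕ}
    (hn : 1 ≤ n) :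
    |∑ k ∈ Ioc 0 n, (k : ℝ) ^ α * log k * (φ k / k)
        - 6 / π ^ 2 * ∫ x in (1 : ℝ)..n, x ^ α * log x|
      ≤ (2 * log n + 5) * (n ^ α * log n) := by
  set c : ℝ := 6 / π ^ 2
  have hc0 : 0 ≤ c := by positivity
  have hc1 : c ≤ 1 := by
    rw [div_le_one (by positivity)]
    nlinarith [pi_gt_three]
  set f : ℕ → ℝ := fun k => (k : ℝ) ^ α * log k
  have hlog : ∀ m ≤ n, log m ≤ log n := fun m hm => by
    rcases m.eq_zero_or_pos with rfl | hm0
    · simpa using log_natCast_nonneg n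
    · exact log_le_log (Nat.cast_pos.mpr hm0) (Nat.cast_le.mpr hm)
  have habel : |∑ k ∈ Ioc 0 n, f k * (φ k / k) - c * ∑ k ∈ Ioc 0 n, f k|
      ≤ 2 * (log n + 2) * f n :=
    abs_sum_Ioc_mul_sub_const_mul_sum_le (monotone_natCast_rpow_mul_log hα) (by simp [f])
      fun m hm => (abs_sum_Ioc_totient_div_self_sub_le m).trans (by linarith [hlog m hm])
  have hsum : |∑ k ∈ Ioc 0 n, f k - ∫ x in (1 : ℝ)..n, x ^ α * log x| ≤ f n := by
    have hmono : MonotoneOn (fun x : ℝ => x ^ α * log x) (Set.Icc ((1 : ℕ) : ℝ) n) :=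
      (monotoneOn_rpow_mul_log hα).mono fun x hx => by simpa using hx.1
    have h := hmono.abs_sum_Ioc_sub_integral_le hn
    rw [← sum_Ioc_consecutive _ (Nat.zero_le 1) hn]
    simpa [f] using h
  calc _ = |(∑ k ∈ Ioc 0 n, f k * (φ k / k) - c * ∑ k ∈ Ioc 0 n, f k)
        + c * (∑ k ∈ Ioc 0 n, f k - ∫ x in (1 : ℝ)..n, x ^ α * log x)| := by
        simp only [f]
        ring_nf
    _ ≤ 2 * (log n + 2) * f n + 1 * f n := by
        refine (abs_add_le _ _).trans (add_le_add habel ?_)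
        rw [abs_mul, abs_of_nonneg hc0]
        exact mul_le_mul hc1 hsum (abs_nonneg _) zero_le_one
    _ = (2 * log n + 5) * (n ^ α * log n) := by ring

theorem tendsto_sum_rpow_mul_log_mul_totient_div_self_sub_div_rpow {α : ℝ} (hα : 0 ≤ α) :
    Tendsto (fun n : ℕ => (∑ k ∈ Ioc 0 n, (k : ℝ) ^ α * log k * (φ k / k)
      - 6 / π ^ 2 * ∫ x in (1 : ℝ)..n, x ^ α * log x) / (n : ℝ) ^ (α + 1))
      atTop (nhds 0) := by
  have hlog : Tendsto (fun n : ℕ => (2 * log n + 5) * log n / n) atTop (nhds 0) := by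
    have h2 := tendsto_pow_log_div_mul_add_atTop 1 0 2 one_ne_zero
    have h1 := tendsto_pow_log_div_mul_add_atTop 1 0 1 one_ne_zero
    simp only [one_mul, add_zero, pow_one] at h1 h2
    have h := ((h2.const_mul 2).add (h1.const_mul 5)).comp tendsto_natCast_atTop_atTop
    rw [mul_zero, mul_zero, add_zero] at h
    refine h.congr fun n => ?_
    simp only [Function.comp_apply]
    ring
  refine squeeze_zero_norm' ?_ hlog
  filter_upwards [eventually_ge_atTop 1] with n hn
  have hn0 : (0 : ℝ) < n := Nat.cast_pos.mpr hn
  rw [norm_div, norm_of_nonneg (rpow_nonneg hn0.le _), rpow_add_one hn0.ne',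
    div_le_div_iff₀ (by positivity) hn0]
  calc _ ≤ (2 * log n + 5) * (n ^ α * log n) * n := by
        gcongr
        exact abs_sum_rpow_mul_log_mul_totient_div_self_sub_le hα hn
    _ = _ := by ring

theorem stmt_11 (α : ℝ) (hα : 0 ≤ α) :
    Filter.Tendsto
      (fun n : ℕ => (1 / (n : ℝ) ^ (α + 1)) *
        (∑ k ∈ Finset.Icc 1 n, (k : ℝ) ^ (α - 1) * Real.log k * Nat.totient k)
        - 6 * ((1 + α) * Real.log n - 1) / (Real.pi ^ 2 * (1 + α) ^ 2))
      Filter.atTop (nhds 0) := by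
  have hα1 : 0 < α + 1 := by linarith
  have hconst : Tendsto (fun n : ℕ => 6 / π ^ 2 / (α + 1) ^ 2 / (n : ℝ) ^ (α + 1)) atTop
      (nhds 0) :=
    tendsto_const_nhds.div_atTop ((tendsto_rpow_atTop hα1).comp tendsto_natCast_atTop_atTop)
  have h := (tendsto_sum_rpow_mul_log_mul_totient_div_self_sub_div_rpow hα).add hconst
  rw [add_zero] at h
  refine h.congr' ?_
  filter_upwards [eventually_ne_atTop 0] with n hn
  have hn0 : (0 : ℝ) < n := Nat.cast_pos.mpr (Nat.pos_of_ne_zero hn)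
  have hsum : ∑ k ∈ Icc 1 n, (k : ℝ) ^ (α - 1) * log k * φ k
      = ∑ k ∈ Ioc 0 n, (k : ℝ) ^ α * log k * (φ k / k) := by
    refine sum_congr (Icc_succ_left_eq_Ioc 0 n) fun k hk => ?_
    rw [rpow_sub_one (Nat.cast_ne_zero.mpr (mem_Ioc.mp hk).1.ne')]
    ring
  rw [hsum, integral_rpow_mul_log (by linarith) hn0]
  have : (n : ℝ) ^ (α + 1) ≠ 0 := (rpow_pos_of_pos hn0 _).ne'
  field_simp
  ring
end
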